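/- arXiv:2303.11380 — 2 statements merged into one kernel-verified Lean document; each statement's English description precedes it below -/
import Mathlib

section
/- Let ζ be the complex number 1/2 + (√3/2)·I and let n : ℤ with ¬(3 ∣ n). Then Σ_{i ∈ Finset.range 3} ( ζ ^ (-(4:ℤ)·i^2 + 12·n·i) + ζ ^ (-(4:ℤ)·i^2 + 4·n·i) ) = 3/2 + ((√3)/2)·I. (This is the paper's evaluation of the invariant of the pair consisting of ℂP² minus its 4-handle together with an embedded sphere representing n times the exceptional divisor, for n not divisible by 3, in the example with ℓ = 3, m = 2, c = 2, g = 1: the value is the sum of two generalized quadratic Gauss sums Σ_i ζ^{-i²m² + 2inm(c+g)} + ζ^{-i²m² + 2inmg}.) -/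
theorem CP2_sphere_invariant_not_dvd (ζ : ℂ) (hζ : ζ = 1/2 + (Real.sqrt 3 / 2) * Complex.I)
    (n : ℤ) (hn : ¬ (3 ∣ n)) :
    ∑ i ∈ Finset.range 3,
        (ζ ^ (-(4 : ℤ) * (i : ℤ) ^ 2 + 12 * n * (i : ℤ)) +
          ζ ^ (-(4 : ℤ) * (i : ℤ) ^ 2 + 4 * n * (i : ℤ))) =
      3 / 2 + ((Real.sqrt 3) / 2) * Complex.I := by
  have hs : (Real.sqrt 3 : ℂ) ^ 2 = 3 := by
    norm_cast
    rw [Real.sq_sqrt] ; norm_num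
  have h2 : ζ ^ 2 = -1/2 + (Real.sqrt 3 / 2) * Complex.I := by
    rw [hζ]
    linear_combination (Complex.I ^ 2 / 4) * hs + (3/4) * Complex.I_sq
  have h3 : ζ ^ 3 = -1 := by
    rw [show (3:ℕ) = 2 + 1 from rfl, pow_succ, h2, hζ]
    linear_combination (Complex.I ^ 2 / 4) * hs + (3/4) * Complex.I_sq
  have hζ0 : ζ ≠ 0 := by
    intro h
    rw [h] at h3
    norm_num at h3
  have h6 : ζ ^ (6:ℤ) = 1 := by
    have : ζ ^ (6:ℕ) = 1 := by
      rw [show (6:ℕ) = 3 * 2 from rfl, pow_mul, h3]; norm_num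
    exact_mod_cast this
  have hz : ∀ e : ℤ, ζ ^ e = ζ ^ (e % 6).toNat := by
    intro e
    have h1 : ζ ^ ((e % 6).toNat : ℤ) = ζ ^ (e % 6).toNat := zpow_natCast ζ _
    calc ζ ^ e = ζ ^ (6 * (e / 6) + e % 6) := by rw [Int.mul_ediv_add_emod]
      _ = (ζ ^ (6:ℤ)) ^ (e / 6) * ζ ^ (e % 6) := by
          rw [zpow_add₀ hζ0, zpow_mul]
      _ = ζ ^ (e % 6) := by rw [h6, one_zpow, one_mul]
      _ = ζ ^ (e % 6).toNat := by
          rw [← h1, Int.toNat_of_nonneg (Int.emod_nonneg e (by norm_num))]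
  rw [Finset.sum_range_succ, Finset.sum_range_succ, Finset.sum_range_succ,
    Finset.sum_range_zero]
  push_cast
  rw [hz, hz, hz, hz, hz, hz]
  obtain ⟨k, hk⟩ : ∃ k, n = 3 * k + 1 ∨ n = 3 * k + 2 := ⟨n / 3, by omega⟩
  have h4 : ζ ^ 4 = -ζ := by
    rw [show (4:ℕ) = 3 + 1 from rfl, pow_succ, h3]; ring
  rcases hk with hk | hk <;> subst hk
  · have e1 : (((0:ℤ) + 12 * (3 * k + 1) * 0) % 6).toNat = 0 := by omega
    have e2 : (((0:ℤ) + 4 * (3 * k + 1) * 0) % 6).toNat = 0 := by omega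
    have e3 : (((-4:ℤ) + 12 * (3 * k + 1) * 1) % 6).toNat = 2 := by omega
    have e4 : (((-4:ℤ) + 4 * (3 * k + 1) * 1) % 6).toNat = 0 := by omega
    have e5 : (((-16:ℤ) + 12 * (3 * k + 1) * 2) % 6).toNat = 2 := by omega
    have e6 : (((-16:ℤ) + 4 * (3 * k + 1) * 2) % 6).toNat = 4 := by omega
    rw [e1, e2, e3, e4, e5, e6, pow_zero]
    linear_combination 2 * h2 + h4 - hζ
  · have e1 : (((0:ℤ) + 12 * (3 * k + 2) * 0) % 6).toNat = 0 := by omega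
    have e2 : (((0:ℤ) + 4 * (3 * k + 2) * 0) % 6).toNat = 0 := by omega
    have e3 : (((-4:ℤ) + 12 * (3 * k + 2) * 1) % 6).toNat = 2 := by omega
    have e4 : (((-4:ℤ) + 4 * (3 * k + 2) * 1) % 6).toNat = 4 := by omega
    have e5 : (((-16:ℤ) + 12 * (3 * k + 2) * 2) % 6).toNat = 2 := by omega
    have e6 : (((-16:ℤ) + 4 * (3 * k + 2) * 2) % 6).toNat = 0 := by omega
    rw [e1, e2, e3, e4, e5, e6, pow_zero]
    linear_combination 2 * h2 + h4 - hζ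
end

section
/- Let ζ be the complex number 1/2 + (√3/2)·I and let n : ℤ with 3 ∣ n. Then Σ_{i ∈ Finset.range 3} ( ζ ^ (-(4:ℤ)·i^2 + 12·n·i) + ζ ^ (-(4:ℤ)·i^2 + 4·n·i) ) = 2·(√3)·I. (This is the paper's evaluation of the invariant of the pair consisting of ℂP² minus its 4-handle together with an embedded sphere representing n times the exceptional divisor, for n divisible by 3, in the example with ℓ = 3, m = 2, c = 2, g = 1; together with the value 3/2 + (√3/2)·I for 3 ∤ n this shows the invariant detects the class of the surface modulo ℓ = 3.) -/
theorem CP2_sphere_invariant_dvd (ζ : ℂ) (hζ : ζ = 1/2 + (Real.sqrt 3 / 2) * Complex.I)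
    (n : ℤ) (hn : 3 ∣ n) :
    ∑ i ∈ Finset.range 3,
        (ζ ^ (-(4 : ℤ) * (i : ℤ) ^ 2 + 12 * n * (i : ℤ)) +
          ζ ^ (-(4 : ℤ) * (i : ℤ) ^ 2 + 4 * n * (i : ℤ))) =
      2 * Real.sqrt 3 * Complex.I := by
  obtain ⟨k, rfl⟩ := hn
  have h3 : ((Real.sqrt 3 : ℂ)) ^ 2 = 3 := by
    norm_cast
    rw [Real.sq_sqrt] <;> norm_num
  have hz2 : ζ ^ 2 = ζ - 1 := by
    rw [hζ]
    linear_combination (Complex.I ^ 2 / 4) * h3 + (3 / 4 : ℂ) * Complex.I_sq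
  have hz0 : ζ ≠ 0 := by
    rw [hζ]
    intro h
    have := congrArg Complex.re h
    simp at this
  have hz3 : ζ ^ 3 = -1 := by linear_combination (ζ + 1) * hz2
  have hz6 : ζ ^ (6 : ℤ) = 1 := by
    rw [show (6 : ℤ) = (6 : ℕ) by rfl, zpow_natCast]
    linear_combination (ζ ^ 3 - 1) * hz3
  have key : ∀ t : ℤ, ζ ^ (6 * t + 2) = ζ ^ 2 := by
    intro t
    rw [zpow_add₀ hz0, zpow_mul, hz6, one_zpow, one_mul,
      show (2:ℤ) = ((2:ℕ):ℤ) from rfl, zpow_natCast]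
  rw [Finset.sum_range_succ, Finset.sum_range_succ, Finset.sum_range_one]
  push_cast
  rw [show ((0:ℤ) + 12 * (3 * k) * 0) = 0 by ring,
      show ((0:ℤ) + 4 * (3 * k) * 0) = 0 by ring,
      show (-4 + 12 * (3 * k) * 1 : ℤ) = 6 * (6 * k - 1) + 2 by ring,
      show (-4 + 4 * (3 * k) * 1 : ℤ) = 6 * (2 * k - 1) + 2 by ring,
      show (-16 + 12 * (3 * k) * 2 : ℤ) = 6 * (12 * k - 3) + 2 by ring,
      show (-16 + 4 * (3 * k) * 2 : ℤ) = 6 * (4 * k - 3) + 2 by ring,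
      key, key, key, key, zpow_zero, hζ]
  linear_combination Complex.I ^ 2 * h3 + 3 * Complex.I_sq
end
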